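/- arXiv:2502.06121 — 4 statements merged into one kernel-verified Lean document; each statement's English description precedes it below -/
import Mathlib

section
/- Let L be an even lattice with Gram matrix G (with respect to some basis) and let R be a subring of ℚ. Then all entries of G⁻¹ lie in R and all diagonal entries of G⁻¹ lie in 2R if and only if det(G) is invertible in R. -/
/-!
Let `M` be the integer matrix underlying `G`. If `det M · r = 1` with `r ∈ R`, then
`G⁻¹ = r • adj M` has entries in `R`; conversely `det G⁻¹ ∈ R` inverts `det G`.
For the diagonal, let `c` be the `i`-th column of `adj M`: then `cᵀ M c = det M · (adj M)ᵢᵢ`,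
and the quadratic form of a symmetric integer matrix with even diagonal only takes even
values (mod 2 it is alternating). Hence `G⁻¹ᵢᵢ = r² · det M · (adj M)ᵢᵢ ∈ 2R`.
-/

open Matrix

namespace Matrix

variable {n : Type*} [Fintype n]

theorem dotProduct_mulVec_self_eq_zero {R : Type*} [CommRing R] {A : Matrix n n R}
    (hskew : Aᵀ = -A) (hdiag : ∀ i, A i i = 0) (x : n → R) : x ⬝ᵥ A *ᵥ x = 0 := by
  simp only [dotProduct, mulVec, Finset.mul_sum, ← Finset.sum_product']
  refine Finset.sum_involution (fun p _ => p.swap) (fun p _ => ?_) (fun p _ hp hswap => ?_)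
    (fun _ _ => Finset.mem_univ _) (fun _ _ => rfl)
  · have h := congr_fun₂ hskew p.1 p.2
    simp only [transpose_apply, neg_apply] at h
    simp only [Prod.fst_swap, Prod.snd_swap, h]
    ring
  · have hdiag_p : p.2 = p.1 := congrArg Prod.fst hswap
    exact hp (by rw [hdiag_p, hdiag, zero_mul, mul_zero])

theorem even_dotProduct_mulVec_self {M : Matrix n n ℤ} (hM : M.IsSymm)
    (hdiag : ∀ i, Even (M i i)) (x : n → ℤ) : Even (x ⬝ᵥ M *ᵥ x) := by
  set f := Int.castRingHom (ZMod 2)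
  have hskew : (M.map f)ᵀ = -M.map f := by
    rw [← transpose_map, hM]
    ext i j
    exact (ZMod.neg_eq_self_mod_two _).symm
  have hdiag' : ∀ i, M.map f i i = 0 := fun i => ZMod.intCast_eq_zero_iff_even.mpr (hdiag i)
  have hvec : f ∘ (M *ᵥ x) = M.map f *ᵥ (f ∘ x) := funext (RingHom.map_mulVec f M x)
  rw [← ZMod.intCast_eq_zero_iff_even, ← eq_intCast f, RingHom.map_dotProduct, hvec]
  exact dotProduct_mulVec_self_eq_zero hskew hdiag' (f ∘ x)

theorem even_det_mul_adjugate_apply_self [DecidableEq n] {M : Matrix n n ℤ} (hM : M.IsSymm)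
    (hdiag : ∀ i, Even (M i i)) (i : n) : Even (M.det * M.adjugate i i) := by
  have hcol : M *ᵥ M.adjugate.col i = M.det • Pi.single i 1 := by
    rw [← mulVec_single_one, mulVec_mulVec, mul_adjugate, smul_mulVec, one_mulVec]
  have h := even_dotProduct_mulVec_self hM hdiag (M.adjugate.col i)
  rwa [hcol, dotProduct_smul, dotProduct_single, col_apply, mul_one, smul_eq_mul] at h

theorem inv_eq_smul_adjugate_of_det_mul_eq_one {K : Type*} [CommRing K] [DecidableEq n]
    {A : Matrix n n K} {r : K} (hr : A.det * r = 1) : A⁻¹ = r • A.adjugate :=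
  inv_eq_right_inv (by rw [mul_smul_comm, mul_adjugate, smul_smul, mul_comm, hr, one_smul])

end Matrix

namespace Subring

variable {K : Type*} [CommRing K] (R : Subring K) {n : Type*} [Fintype n] [DecidableEq n]

theorem det_mem {A : Matrix n n K} (h : ∀ i j, A i j ∈ R) : A.det ∈ R := by
  rw [det_apply]
  exact R.sum_mem fun σ _ => Subring.zsmul_mem _ (R.prod_mem fun i _ => h _ _) _

theorem exists_det_mul_eq_one_of_inv_mem {A : Matrix n n K}
    (hA : IsUnit A.det) (h : ∀ i j, A⁻¹ i j ∈ R) : ∃ r ∈ R, A.det * r = 1 :=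
  ⟨A⁻¹.det, R.det_mem h, by rw [det_nonsing_inv, Ring.mul_inverse_cancel _ hA]⟩

end Subring

/-- Let `G` be the Gram matrix of an even lattice (so `G` is a
symmetric integer matrix with even diagonal and nonzero determinant, viewed
over `ℚ`) and let `R` be a subring of `ℚ`.  Then all entries of `G⁻¹` lie in
`R` and all diagonal entries of `G⁻¹` lie in `2R` if and only if `det G` is
invertible in `R`. -/
theorem stmt2 (l : ℕ) (G : Matrix (Fin l) (Fin l) ℚ)
    (hint : ∀ i j, ∃ m : ℤ, G i j = (m : ℚ))
    (hsymm : G.IsSymm)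
    (heven : ∀ i, ∃ m : ℤ, G i i = 2 * (m : ℚ))
    (hdet : G.det ≠ 0)
    (R : Subring ℚ) :
    ((∀ i j, G⁻¹ i j ∈ R) ∧ (∀ i, ∃ r ∈ R, G⁻¹ i i = 2 * r)) ↔
      (∃ r ∈ R, G.det * r = 1) := by
  choose M hM using hint
  obtain rfl : G = (of M).map Int.cast := ext hM
  have hMsymm : (of M).IsSymm := ext fun i j => Int.cast_injective (hsymm.apply i j)
  have hMeven : ∀ i, Even (of M i i) := fun i => by
    obtain ⟨m, hm⟩ := heven i
    exact ⟨m, Int.cast_injective (α := ℚ) (by rw [Int.cast_add, ← two_mul]; exact hm)⟩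
  have hadj : ∀ i j, ((of M).map Int.cast).adjugate i j = ((of M).adjugate i j : ℚ) :=
    fun i j => congr_fun₂ ((Int.castRingHom ℚ).map_adjugate (of M)).symm i j
  constructor
  · rintro ⟨hmem, -⟩
    exact R.exists_det_mul_eq_one_of_inv_mem (isUnit_iff_ne_zero.mpr hdet) hmem
  · rintro ⟨r, hr, hdr⟩
    rw [inv_eq_smul_adjugate_of_det_mul_eq_one hdr]
    refine ⟨fun i j => ?_, fun i => ?_⟩
    · rw [Matrix.smul_apply, hadj, smul_eq_mul]
      exact R.mul_mem hr (intCast_mem R _)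
    · obtain ⟨k, hk⟩ := even_det_mul_adjugate_apply_self hMsymm hMeven i
      refine ⟨k * r * r, R.mul_mem (R.mul_mem (intCast_mem R k) hr) hr, ?_⟩
      rw [← Int.cast_det] at hdr
      calc (r • ((of M).map Int.cast).adjugate) i i
          = r * (of M).adjugate i i * ((of M).det * r) := by
            rw [Matrix.smul_apply, hadj, smul_eq_mul, hdr, mul_one]
        _ = ((of M).det * (of M).adjugate i i : ℤ) * r * r := by push_cast; ring
        _ = 2 * (k * r * r) := by rw [hk]; push_cast; ring
end

section
/- Let L be an even lattice with Gram matrix G such that det(G) is a unit in a subring R of ℚ. Then every diagonal entry of G⁻¹ lies in 2R. -/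
private lemma det_mem_aux {n : ℕ} (R : Subring ℚ) (M : Matrix (Fin n) (Fin n) ℚ)
    (h : ∀ i j, M i j ∈ R) : M.det ∈ R := by
  rw [Matrix.det_apply]
  exact sum_mem fun σ _ => zsmul_mem (prod_mem fun i _ => h _ _) _

private lemma sum_sq_split {n : ℕ} (f : Fin n → Fin n → ℚ) (hf : ∀ j k, f j k = f k j) :
    ∑ j, ∑ k, f j k
      = (∑ j, f j j)
        + 2 * ∑ p ∈ (Finset.univ.offDiag.filter fun p : Fin n × Fin n => p.1 < p.2),
            f p.1 p.2 := by
  rw [← Finset.sum_product', ← Finset.diag_union_offDiag,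
    Finset.sum_union (Finset.disjoint_diag_offDiag _), Finset.sum_diag]
  congr 1
  rw [← Finset.sum_filter_add_sum_filter_not Finset.univ.offDiag
    (fun p : Fin n × Fin n => p.1 < p.2)]
  have hswap : ∑ p ∈ Finset.univ.offDiag.filter (fun p : Fin n × Fin n => ¬ p.1 < p.2),
      f p.1 p.2
      = ∑ p ∈ Finset.univ.offDiag.filter (fun p : Fin n × Fin n => p.1 < p.2), f p.1 p.2 := by
    refine Finset.sum_bij' (fun p _ => Prod.swap p) (fun p _ => Prod.swap p) ?_ ?_ ?_ ?_ ?_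
    · intro p hp
      simp only [Finset.mem_filter, Finset.mem_offDiag, Finset.mem_univ, true_and] at hp ⊢
      exact ⟨(Ne.symm hp.1), lt_of_le_of_ne (not_lt.mp hp.2) (Ne.symm hp.1)⟩
    · intro p hp
      simp only [Finset.mem_filter, Finset.mem_offDiag, Finset.mem_univ, true_and] at hp ⊢
      exact ⟨Ne.symm hp.1, not_lt.mpr hp.2.le⟩
    · intro p _; rfl
    · intro p _; rfl
    · intro p _; exact hf p.1 p.2
  rw [hswap]; ring

/-- Let `G` be the Gram matrix of an even lattice (a symmetric
integer matrix with even diagonal and nonzero determinant, viewed over `ℚ`)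
and `R ⊆ ℚ` a subring in which `det G` is invertible.  Then every diagonal
entry of `G⁻¹` lies in `2R`. -/
theorem stmt3 (l : ℕ) (G : Matrix (Fin l) (Fin l) ℚ)
    (hint : ∀ i j, ∃ m : ℤ, G i j = (m : ℚ))
    (hsymm : G.IsSymm)
    (heven : ∀ i, ∃ m : ℤ, G i i = 2 * (m : ℚ))
    (hdet : G.det ≠ 0)
    (R : Subring ℚ)
    (hunit : ∃ r ∈ R, G.det * r = 1) :
    ∀ i, ∃ r ∈ R, G⁻¹ i i = 2 * r := by
  intro i
  obtain ⟨r, hrR, hr⟩ := hunit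
  have hrinv : r = (G.det)⁻¹ := eq_inv_of_mul_eq_one_right hr
  have hGmem : ∀ j k, G j k ∈ R := by
    intro j k
    obtain ⟨m, hm⟩ := hint j k
    rw [hm]; exact intCast_mem R m
  -- entries of the adjugate lie in R
  have hadj : ∀ j k, G.adjugate j k ∈ R := by
    intro j k
    rw [Matrix.adjugate_apply]
    refine det_mem_aux R _ ?_
    intro a b
    rw [Matrix.updateRow_apply]
    split
    · by_cases hb : b = j
      · subst hb; simp only [Pi.single_eq_same]; exact one_mem R
      · rw [Pi.single_eq_of_ne hb]; exact zero_mem R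
    · exact hGmem a b
  have hGinv : ∀ j k, G⁻¹ j k = r * G.adjugate j k := by
    intro j k
    rw [Matrix.inv_def, Matrix.smul_apply, smul_eq_mul, hrinv, Ring.inverse_eq_inv']
  have hy : ∀ j k, G⁻¹ j k ∈ R := fun j k => by
    rw [hGinv]; exact mul_mem hrR (hadj j k)
  have hGsymm : ∀ j k, G j k = G k j := fun j k => (hsymm.apply j k).symm
  -- the quadratic form evaluated at the i-th column of G⁻¹
  set f : Fin l → Fin l → ℚ := fun j k => G⁻¹ j i * G j k * G⁻¹ k i with hf
  have hfsymm : ∀ j k, f j k = f k j := by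
    intro j k
    simp only [hf]
    rw [hGsymm j k]; ring
  have hkey : ∑ j, ∑ k, f j k = G⁻¹ i i := by
    have hmul : G * G⁻¹ = 1 := Matrix.mul_nonsing_inv G (isUnit_iff_ne_zero.mpr hdet)
    have step : ∀ j, ∑ k, f j k = G⁻¹ j i * (if j = i then (1:ℚ) else 0) := by
      intro j
      have : ∑ k, G j k * G⁻¹ k i = (G * G⁻¹) j i := by
        rw [Matrix.mul_apply]
      calc ∑ k, f j k = G⁻¹ j i * ∑ k, G j k * G⁻¹ k i := by
            rw [Finset.mul_sum]; exact Finset.sum_congr rfl fun k _ => by ring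
        _ = G⁻¹ j i * (if j = i then (1:ℚ) else 0) := by
            rw [this, hmul, Matrix.one_apply]
    simp_rw [step]
    simp
  set T : ℚ := ∑ p ∈ (Finset.univ.offDiag.filter fun p : Fin l × Fin l => p.1 < p.2),
    f p.1 p.2 with hT
  have hTmem : T ∈ R := sum_mem fun p _ => mul_mem (mul_mem (hy _ _) (hGmem _ _)) (hy _ _)
  have hdiag : ∀ j, f j j = 2 * ((G j j / 2) * G⁻¹ j i * G⁻¹ j i) := by
    intro j; simp only [hf]; ring
  have hhalf : ∀ j, G j j / 2 ∈ R := by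
    intro j
    obtain ⟨m, hm⟩ := heven j
    have : G j j / 2 = (m : ℚ) := by rw [hm]; ring
    rw [this]; exact intCast_mem R m
  refine ⟨(∑ j, (G j j / 2) * G⁻¹ j i * G⁻¹ j i) + T, ?_, ?_⟩
  · exact add_mem (sum_mem fun j _ => mul_mem (mul_mem (hhalf j) (hy _ _)) (hy _ _)) hTmem
  · rw [← hkey, sum_sq_split f hfsymm, ← hT]
    rw [mul_add]
    congr 1
    rw [Finset.mul_sum]
    exact Finset.sum_congr rfl fun j _ => hdiag j
end

section
/- Let A be a free abelian group with basis α₁,…,α_n and let c: A × A → {±1} be an alternating bimultiplicative map. Define ε: A × A → {±1} as the unique bimultiplicative map with ε(α_i, α_j) = c(α_i, α_j) if i > j and ε(α_i, α_j) = 1 if i ≤ j. Then ε is a 2-cocycle on A with values in {±1} (i.e., ε(a,b)ε(a+b,c) = ε(b,c)ε(a,b+c) for all a,b,c ∈ A), and ε(a,b)ε(b,a)⁻¹ = c(a,b) for all a, b ∈ A. -/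
/-!
Both sides of the cocycle identity expand, by bimultiplicativity, to `ε a b * ε a d * ε b d`.
For the commutator identity, `(a, b) ↦ ε a b * ε b a * c a b` is again bimultiplicative, so it
is trivial as soon as it is trivial on pairs of basis vectors; there it is `c * c`, `1 * c`, or
`c (α i) (α j) * c (α j) (α i)`, each `1` because `c` is `±1`-valued and alternating. Since every
unit of `ℤ` is its own inverse, this is the claim.
-/

section Bimultiplicative

variable {A G : Type*} [AddCommGroup A] [CommGroup G]

theorem eq_one_of_map_add_of_basis {ι : Type*} (α : Module.Basis ι ℤ A) {f : A → G}
    (hf : ∀ x y, f (x + y) = f x * f y) (hα : ∀ i, f (α i) = 1) (a : A) : f a = 1 := by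
  let g : A →+ Additive G := AddMonoidHom.mk' (fun x => Additive.ofMul (f x)) hf
  have hg : g.toIntLinearMap = 0 := α.ext fun i => congrArg Additive.ofMul (hα i)
  exact congrArg Additive.toMul (LinearMap.congr_fun hg a)

theorem eq_one_of_bimultiplicative_of_basis {ι : Type*} (α : Module.Basis ι ℤ A)
    {f : A → A → G} (hf₁ : ∀ a a' b, f (a + a') b = f a b * f a' b)
    (hf₂ : ∀ a b b', f a (b + b') = f a b * f a b') (hα : ∀ i j, f (α i) (α j) = 1)
    (a b : A) : f a b = 1 :=
  eq_one_of_map_add_of_basis α (f := (f · b)) (fun x y => hf₁ x y b)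
    (fun i => eq_one_of_map_add_of_basis α (hf₂ (α i)) (hα i) b) a

theorem mul_swap_eq_one_of_alternating {c : A → A → G}
    (hc₁ : ∀ a a' b, c (a + a') b = c a b * c a' b)
    (hc₂ : ∀ a b b', c a (b + b') = c a b * c a b') (hcalt : ∀ a, c a a = 1) (a b : A) :
    c a b * c b a = 1 := by
  have h := hcalt (a + b)
  rwa [hc₁, hc₂, hc₂, hcalt, hcalt, one_mul, mul_one] at h

theorem cocycle_of_bimultiplicative {ε : A → A → G}
    (hε₁ : ∀ a a' b, ε (a + a') b = ε a b * ε a' b)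
    (hε₂ : ∀ a b b', ε a (b + b') = ε a b * ε a b') (a b d : A) :
    ε a b * ε (a + b) d = ε b d * ε a (b + d) := by
  rw [hε₁, hε₂]
  ac_rfl

end Bimultiplicative

/-- Let `A` be a free abelian group with ordered basis
`α : Fin n → A`, and `c : A × A → {±1}` alternating and bimultiplicative.
If `ε : A × A → {±1}` is the bimultiplicative map with
`ε (α i, α j) = c (α i, α j)` for `i > j` and `= 1` for `i ≤ j`, then `ε` is a
2-cocycle and `ε (a, b) * ε (b, a)⁻¹ = c (a, b)` for all `a b`. -/
theorem stmt5 (n : ℕ) (A : Type*) [AddCommGroup A] (α : Module.Basis (Fin n) ℤ A)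
    (c : A → A → ℤˣ)
    (hc₁ : ∀ a a' b, c (a + a') b = c a b * c a' b)
    (hc₂ : ∀ a b b', c a (b + b') = c a b * c a b')
    (hcalt : ∀ a, c a a = 1)
    (ε : A → A → ℤˣ)
    (hε₁ : ∀ a a' b, ε (a + a') b = ε a b * ε a' b)
    (hε₂ : ∀ a b b', ε a (b + b') = ε a b * ε a b')
    (hεval : ∀ i j : Fin n, ε (α i) (α j) = if j < i then c (α i) (α j) else 1) :
    (∀ a b d : A, ε a b * ε (a + b) d = ε b d * ε a (b + d)) ∧
    (∀ a b : A, ε a b * (ε b a)⁻¹ = c a b) := by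
  refine ⟨cocycle_of_bimultiplicative hε₁ hε₂, fun a b => ?_⟩
  have hbasis : ∀ i j, ε (α i) (α j) * ε (α j) (α i) * c (α i) (α j) = 1 := by
    intro i j
    rw [hεval, hεval]
    rcases lt_trichotomy i j with h | rfl | h
    · rw [if_neg h.asymm, if_pos h, one_mul]
      exact mul_swap_eq_one_of_alternating hc₁ hc₂ hcalt _ _
    · simp [hcalt]
    · rw [if_pos h, if_neg h.asymm, mul_one]
      exact Int.units_mul_self _
  have hprod : ε a b * ε b a * c a b = 1 :=
    eq_one_of_bimultiplicative_of_basis α (f := fun a b => ε a b * ε b a * c a b)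
      (fun x y b => by simp only [hε₁, hε₂, hc₁]; ac_rfl)
      (fun a x y => by simp only [hε₁, hε₂, hc₂]; ac_rfl) hbasis a b
  rw [Int.units_inv_eq_self, ← Int.units_inv_eq_self (c a b)]
  exact eq_inv_of_mul_eq_one_left hprod
end

section
/- Let R be a commutative ring, S a faithfully flat R-algebra, V an R-module, and x an S-linear automorphism of V ⊗_R S. Suppose the two base changes of x to V ⊗_R S ⊗_R S agree (x extended in the first S-factor equals x extended in the second S-factor). Then x descends: there exists an R-linear automorphism x' of V with x = x' ⊗ id_S. -/
/-!
Write `ι : V → S ⊗ V` for `v ↦ 1 ⊗ v` and `d : S ⊗ V → S ⊗ S ⊗ V` for `y ↦ 1 ⊗ y - swap (1 ⊗ y)`.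
The sequence `0 → V → S ⊗ V → S ⊗ S ⊗ V` is exact: after base change to `S` it has the contracting
homotopy given by multiplication into the first factor, and faithful flatness reflects exactness.
If the two base changes of `x` agree, then `d (x (1 ⊗ v)) = 0`, so `x (1 ⊗ v) = 1 ⊗ x' v` for a
unique `x' v`. This `x'` is `R`-linear with `id_S ⊗ x' = x`; since `x` is bijective, so is `x'`
by faithful flatness.
-/

open TensorProduct LinearMap

/-- The swap of the two `S`-factors of `S ⊗[R] (S ⊗[R] V)`. -/
noncomputable def swapFirstTwo (R S V : Type*) [CommRing R] [CommRing S]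
    [Algebra R S] [AddCommGroup V] [Module R V] :
    S ⊗[R] (S ⊗[R] V) ≃ₗ[R] S ⊗[R] (S ⊗[R] V) :=
  (TensorProduct.assoc R S S V).symm ≪≫ₗ
    TensorProduct.congr (TensorProduct.comm R S S) (LinearEquiv.refl R V) ≪≫ₗ
    TensorProduct.assoc R S S V

lemma LinearMap.exact_of_homotopy {R M N P : Type*} [CommRing R] [AddCommGroup M] [Module R M]
    [AddCommGroup N] [Module R N] [AddCommGroup P] [Module R P] {f : M →ₗ[R] N} {g : N →ₗ[R] P}
    (σ : N →ₗ[R] M) (τ : P →ₗ[R] N) (hgf : g ∘ₗ f = 0) (hid : f ∘ₗ σ + τ ∘ₗ g = id) :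
    Function.Exact f g := by
  refine exact_of_comp_of_mem_range hgf fun y hy ↦ ⟨σ y, ?_⟩
  simpa [hy] using congr($hid y)

lemma LinearMap.exists_comp_eq_of_forall_mem_range {R M N P : Type*} [CommRing R]
    [AddCommGroup M] [Module R M] [AddCommGroup N] [Module R N] [AddCommGroup P] [Module R P]
    {i : M →ₗ[R] N} (hi : Function.Injective i) {φ : P →ₗ[R] N} (hφ : ∀ p, φ p ∈ range i) :
    ∃ ψ : P →ₗ[R] M, i ∘ₗ ψ = φ := by
  refine ⟨(LinearEquiv.ofInjective i hi).symm.toLinearMap ∘ₗ φ.codRestrict _ hφ, ?_⟩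
  ext p
  exact congr(Subtype.val $((LinearEquiv.ofInjective i hi).apply_symm_apply ⟨φ p, hφ p⟩))

section Amitsur

variable (R S M : Type*) [CommRing R] [CommRing S] [Algebra R S] [AddCommGroup M] [Module R M]

@[simp]
lemma swapFirstTwo_tmul (s t : S) (m : M) :
    swapFirstTwo R S M (s ⊗ₜ (t ⊗ₜ m)) = t ⊗ₜ (s ⊗ₜ m) := by
  simp [swapFirstTwo]

noncomputable def amitsurDiff : S ⊗[R] M →ₗ[R] S ⊗[R] (S ⊗[R] M) :=
  TensorProduct.mk R S (S ⊗[R] M) 1 -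
    (swapFirstTwo R S M).toLinearMap ∘ₗ TensorProduct.mk R S (S ⊗[R] M) 1

@[simp]
lemma amitsurDiff_apply (y : S ⊗[R] M) :
    amitsurDiff R S M y = 1 ⊗ₜ y - swapFirstTwo R S M (1 ⊗ₜ y) := rfl

lemma exact_mk_one_amitsurDiff [Module.FaithfullyFlat R S] :
    Function.Exact (TensorProduct.mk R S M 1) (amitsurDiff R S M) := by
  apply Module.FaithfullyFlat.lTensor_reflects_exact R S
  refine exact_of_homotopy (((LinearMap.id : S ⊗[R] M →ₗ[R] _).liftBaseChange S).restrictScalars R)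
    (((LinearMap.id : S ⊗[R] (S ⊗[R] M) →ₗ[R] _).liftBaseChange S).restrictScalars R) ?_ ?_
  · ext s m
    simp
  · ext s t m
    simp [tmul_sub, smul_tmul']

lemma mem_range_mk_one_of_swapFirstTwo [Module.FaithfullyFlat R S] {y : S ⊗[R] M}
    (hy : swapFirstTwo R S M (1 ⊗ₜ y) = 1 ⊗ₜ y) : y ∈ range (TensorProduct.mk R S M 1) :=
  (exact_mk_one_amitsurDiff R S M y).mp (by simp [hy])

end Amitsur

lemma exists_lTensor_eq_of_swapFirstTwo_comm {R S V : Type*} [CommRing R] [CommRing S]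
    [Algebra R S] [Module.FaithfullyFlat R S] [AddCommGroup V] [Module R V]
    (f : S ⊗[R] V →ₗ[S] S ⊗[R] V)
    (h : lTensor S (f.restrictScalars R) =
      (swapFirstTwo R S V).toLinearMap ∘ₗ lTensor S (f.restrictScalars R) ∘ₗ
        (swapFirstTwo R S V).toLinearMap) :
    ∃ f' : V →ₗ[R] V, f'.lTensor S = f.restrictScalars R := by
  have hmem (v : V) : f (1 ⊗ₜ v) ∈ range (TensorProduct.mk R S V 1) := by
    refine mem_range_mk_one_of_swapFirstTwo R S V ?_
    simpa using congr($h (1 ⊗ₜ (1 ⊗ₜ v))).symm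
  obtain ⟨f', hf'⟩ := exists_comp_eq_of_forall_mem_range
    (Module.FaithfullyFlat.tensorProduct_mk_injective V)
    (φ := f.restrictScalars R ∘ₗ TensorProduct.mk R S V 1) hmem
  refine ⟨f', TensorProduct.ext' fun s v ↦ ?_⟩
  have h1 : f (1 ⊗ₜ v) = 1 ⊗ₜ f' v := congr($hf' v).symm
  calc s ⊗ₜ f' v = s • f (1 ⊗ₜ v) := by rw [h1, smul_tmul', smul_eq_mul, mul_one]
    _ = f (s ⊗ₜ v) := by rw [← map_smul, smul_tmul', smul_eq_mul, mul_one]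

/-- Faithfully flat descent for module automorphisms.  Let
`R → S` be faithfully flat, `V` an `R`-module, and `x` an `S`-linear
automorphism of `V ⊗_R S` (here written `S ⊗[R] V`).  If the two base changes
of `x` to `S ⊗_R S ⊗_R V` agree (i.e. `id_S ⊗ x` is invariant under swapping
the two `S`-factors), then `x` descends to an `R`-linear automorphism `x'` of
`V` with `x = id_S ⊗ x'`. -/
theorem stmt16 (R S : Type*) [CommRing R] [CommRing S] [Algebra R S]
    [Module.FaithfullyFlat R S]
    (V : Type*) [AddCommGroup V] [Module R V]
    (x : S ⊗[R] V ≃ₗ[S] S ⊗[R] V)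
    (h : LinearMap.lTensor S ((x : S ⊗[R] V →ₗ[S] S ⊗[R] V).restrictScalars R) =
      (swapFirstTwo R S V).toLinearMap ∘ₗ
        LinearMap.lTensor S ((x : S ⊗[R] V →ₗ[S] S ⊗[R] V).restrictScalars R) ∘ₗ
        (swapFirstTwo R S V).toLinearMap) :
    ∃ x' : V ≃ₗ[R] V, ∀ (s : S) (v : V), x (s ⊗ₜ v) = s ⊗ₜ (x' v) := by
  obtain ⟨x', hx'⟩ := exists_lTensor_eq_of_swapFirstTwo_comm _ h
  have hbij : Function.Bijective x' := by
    rw [← Module.FaithfullyFlat.lTensor_bijective_iff_bijective R S, hx']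
    exact x.bijective
  exact ⟨LinearEquiv.ofBijective x' hbij, fun s v ↦ congr($hx' (s ⊗ₜ v)).symm⟩
end
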